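/- The unity conditions hold: ∘ ∘ (id_{H1} ⊗ i) ∘ DR = id_{H1} and ∘ ∘ (i ⊗ id_{H1}) ∘ DL = id_{H1}; explicitly, (a_(1)⊗h_(1))∘(1⊗ε(a_(2))h_(2)) = a⊗h and (1⊗d(a_(1))h_(1))∘(a_(2)⊗h_(2)) = a⊗h for all a ∈ A, h ∈ H. (Part of Theorem 2.6.) -/
import Mathlib


open TensorProduct

noncomputable section

variable (k A H : Type*) [Field k] [Ring A] [Ring H]
  [HopfAlgebra k A] [HopfAlgebra k H]

/-- `t(a⊗h) = d(a)h`. -/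
def tmap (d : A →ₗ[k] H) : A ⊗[k] H →ₗ[k] H :=
  LinearMap.mul' k H ∘ₗ map d LinearMap.id

/-- `s(a⊗h) = ε(a)h`. -/
def smap : A ⊗[k] H →ₗ[k] H :=
  (TensorProduct.lid k H).toLinearMap ∘ₗ map (Coalgebra.counit : A →ₗ[k] k) LinearMap.id

/-- `i(h) = 1⊗h`. -/
def imap : H →ₗ[k] A ⊗[k] H := TensorProduct.mk k A H 1

/-- The tensor-product coproduct `Δ(a⊗h) = (a₁⊗h₁) ⊗ (a₂⊗h₂)` on `H1 = A ⊗ H`. -/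
def comul1 : A ⊗[k] H →ₗ[k] (A ⊗[k] H) ⊗[k] (A ⊗[k] H) :=
  (tensorTensorTensorComm k A A H H).toLinearMap ∘ₗ
    map (Coalgebra.comul : A →ₗ[k] A ⊗[k] A) (Coalgebra.comul : H →ₗ[k] H ⊗[k] H)

/-- The tensor-product counit `ε(a⊗h) = ε(a)ε(h)` on `H1 = A ⊗ H`. -/
def counit1 : A ⊗[k] H →ₗ[k] k :=
  (TensorProduct.lid k k).toLinearMap ∘ₗ
    map (Coalgebra.counit : A →ₗ[k] k) (Coalgebra.counit : H →ₗ[k] k)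

/-- The left coaction `DL = (t⊗id)Δ`. -/
def DLmap (d : A →ₗ[k] H) : A ⊗[k] H →ₗ[k] H ⊗[k] (A ⊗[k] H) :=
  map (tmap k A H d) LinearMap.id ∘ₗ comul1 k A H

/-- The right coaction `DR = (id⊗s)Δ`. -/
def DRmap : A ⊗[k] H →ₗ[k] (A ⊗[k] H) ⊗[k] H :=
  map LinearMap.id (smap k A H) ∘ₗ comul1 k A H

/-- The second product `(a⊗h)∘(b⊗g) = ε(h) ab ⊗ g`. -/
def circ : (A ⊗[k] H) ⊗[k] (A ⊗[k] H) →ₗ[k] A ⊗[k] H :=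
  map (LinearMap.mul' k A)
      ((TensorProduct.lid k H).toLinearMap ∘ₗ map (Coalgebra.counit : H →ₗ[k] k) LinearMap.id)
    ∘ₗ (tensorTensorTensorComm k A H A H).toLinearMap

/-- The quantum groupoid antipode `𝒮(a⊗h) = S(a₁) ⊗ d(a₂)h`. -/
def SS (d : A →ₗ[k] H) : A ⊗[k] H →ₗ[k] A ⊗[k] H :=
  map (HopfAlgebra.antipode (R := k) : A →ₗ[k] A) (tmap k A H d)
    ∘ₗ (TensorProduct.assoc k A A H).toLinearMap
    ∘ₗ map (Coalgebra.comul : A →ₗ[k] A ⊗[k] A) LinearMap.id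

/-- The smash product multiplication `(a⊗h)(b⊗g) = a(h₁▷b) ⊗ h₂g`. -/
def smashMul (act : H ⊗[k] A →ₗ[k] A) :
    (A ⊗[k] H) ⊗[k] (A ⊗[k] H) →ₗ[k] A ⊗[k] H :=
  map (LinearMap.mul' k A) LinearMap.id
  ∘ₗ (TensorProduct.assoc k A A H).symm.toLinearMap
  ∘ₗ map LinearMap.id
      (map act (LinearMap.mul' k H)
        ∘ₗ (tensorTensorTensorComm k H H A H).toLinearMap)
  ∘ₗ (TensorProduct.assoc k A (H ⊗[k] H) (A ⊗[k] H)).toLinearMap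
  ∘ₗ map (map LinearMap.id (Coalgebra.comul : H →ₗ[k] H ⊗[k] H)) LinearMap.id

/-- The cotensor product `H1□H1`. -/
def cot (d : A →ₗ[k] H) : Set ((A ⊗[k] H) ⊗[k] (A ⊗[k] H)) :=
  {x | (TensorProduct.assoc k (A ⊗[k] H) H (A ⊗[k] H)).toLinearMap
        (map (DRmap k A H) LinearMap.id x) = map LinearMap.id (DLmap k A H d) x}

/-- A Hopf (algebra) crossed module. -/
structure HopfCrossedModule (act : H ⊗[k] A →ₗ[k] A) (d : A →ₗ[k] H) : Prop where
  /-- `(hg)▷a = h▷(g▷a)` -/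
  act_mul : ∀ (h g : H) (a : A), act ((h * g) ⊗ₜ[k] a) = act (h ⊗ₜ[k] act (g ⊗ₜ[k] a))
  /-- `1▷a = a` -/
  act_one : ∀ a : A, act ((1 : H) ⊗ₜ[k] a) = a
  /-- `h▷(ab) = (h₁▷a)(h₂▷b)` -/
  act_mul_alg : act ∘ₗ map LinearMap.id (LinearMap.mul' k A)
      = LinearMap.mul' k A ∘ₗ map act act
          ∘ₗ (tensorTensorTensorComm k H H A A).toLinearMap
          ∘ₗ map (Coalgebra.comul : H →ₗ[k] H ⊗[k] H) LinearMap.id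
  /-- `h▷1 = ε(h)1` -/
  act_unit : ∀ h : H, act (h ⊗ₜ[k] (1 : A)) = (Coalgebra.counit h : k) • (1 : A)
  /-- `Δ(h▷a) = (h₁▷a₁)⊗(h₂▷a₂)` -/
  act_comul : (Coalgebra.comul : A →ₗ[k] A ⊗[k] A) ∘ₗ act
      = map act act ∘ₗ (tensorTensorTensorComm k H H A A).toLinearMap
          ∘ₗ map (Coalgebra.comul : H →ₗ[k] H ⊗[k] H) (Coalgebra.comul : A →ₗ[k] A ⊗[k] A)
  /-- `ε(h▷a) = ε(h)ε(a)` -/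
  act_counit : ∀ (h : H) (a : A),
      (Coalgebra.counit (act (h ⊗ₜ[k] a)) : k) = Coalgebra.counit h * Coalgebra.counit a
  /-- `h₁ ⊗ (h₂▷a) = h₂ ⊗ (h₁▷a)` -/
  act_cocomm : map LinearMap.id act ∘ₗ (TensorProduct.assoc k H H A).toLinearMap
        ∘ₗ map (Coalgebra.comul : H →ₗ[k] H ⊗[k] H) LinearMap.id
      = map LinearMap.id act ∘ₗ (TensorProduct.assoc k H H A).toLinearMap
        ∘ₗ map ((TensorProduct.comm k H H).toLinearMap
              ∘ₗ (Coalgebra.comul : H →ₗ[k] H ⊗[k] H)) LinearMap.id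
  /-- `d` is multiplicative -/
  d_mul : ∀ a b : A, d (a * b) = d a * d b
  /-- `d(1) = 1` -/
  d_one : d 1 = 1
  /-- `d` is comultiplicative -/
  d_comul : (Coalgebra.comul : H →ₗ[k] H ⊗[k] H) ∘ₗ d
      = map d d ∘ₗ (Coalgebra.comul : A →ₗ[k] A ⊗[k] A)
  /-- `ε∘d = ε` -/
  d_counit : (Coalgebra.counit : H →ₗ[k] k) ∘ₗ d = (Coalgebra.counit : A →ₗ[k] k)
  /-- `d(h▷a) = h₁ d(a) S(h₂)` -/
  d_act : d ∘ₗ act = LinearMap.mul' k H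
      ∘ₗ map LinearMap.id (LinearMap.mul' k H
            ∘ₗ map LinearMap.id (HopfAlgebra.antipode (R := k) : H →ₗ[k] H)
            ∘ₗ (TensorProduct.comm k H H).toLinearMap)
      ∘ₗ (TensorProduct.assoc k H H H).toLinearMap
      ∘ₗ map (Coalgebra.comul : H →ₗ[k] H ⊗[k] H) d
  /-- `d(a)▷b = a₁ b S(a₂)` -/
  crossed : act ∘ₗ map d LinearMap.id = LinearMap.mul' k A
      ∘ₗ map LinearMap.id (LinearMap.mul' k A
            ∘ₗ map LinearMap.id (HopfAlgebra.antipode (R := k) : A →ₗ[k] A)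
            ∘ₗ (TensorProduct.comm k A A).toLinearMap)
      ∘ₗ (TensorProduct.assoc k A A A).toLinearMap
      ∘ₗ map (Coalgebra.comul : A →ₗ[k] A ⊗[k] A) LinearMap.id


/-- Theorem 2.6 (part): the unity conditions `∘(id⊗i)DR = ∘(i⊗id)DL = id`. -/
theorem statement6 (act : H ⊗[k] A →ₗ[k] A) (d : A →ₗ[k] H)
    (hcm : HopfCrossedModule k A H act d) :
    circ k A H ∘ₗ map LinearMap.id (imap k A H) ∘ₗ DRmap k A H = LinearMap.id
    ∧ circ k A H ∘ₗ map (imap k A H) LinearMap.id ∘ₗ DLmap k A H d = LinearMap.id := by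
  have hd : ∀ a : A, (Coalgebra.counit (d a) : k) = Coalgebra.counit a :=
    fun a => LinearMap.congr_fun hcm.d_counit a
  have hu : ((TensorProduct.rid k A).toLinearMap ∘ₗ
      LinearMap.lTensor A (Coalgebra.counit : A →ₗ[k] k)) ∘ₗ
      (Coalgebra.comul : A →ₗ[k] A ⊗[k] A) = LinearMap.id := by
    ext a; simp [Coalgebra.lTensor_counit_comul]
  have hv : ((TensorProduct.lid k H).toLinearMap ∘ₗ
      LinearMap.rTensor H (Coalgebra.counit : H →ₗ[k] k)) ∘ₗ
      (Coalgebra.comul : H →ₗ[k] H ⊗[k] H) = LinearMap.id := by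
    ext h; simp [Coalgebra.rTensor_counit_comul]
  have hu2 : ((TensorProduct.lid k A).toLinearMap ∘ₗ
      LinearMap.rTensor A (Coalgebra.counit : A →ₗ[k] k)) ∘ₗ
      (Coalgebra.comul : A →ₗ[k] A ⊗[k] A) = LinearMap.id := by
    ext a; simp [Coalgebra.rTensor_counit_comul]
  constructor
  · have key : circ k A H ∘ₗ map LinearMap.id (imap k A H) ∘ₗ
        map (LinearMap.id : A ⊗[k] H →ₗ[k] A ⊗[k] H) (smap k A H) ∘ₗ
        (tensorTensorTensorComm k A A H H).toLinearMap
      = map ((TensorProduct.rid k A).toLinearMap ∘ₗ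
              LinearMap.lTensor A (Coalgebra.counit : A →ₗ[k] k))
            ((TensorProduct.lid k H).toLinearMap ∘ₗ
              LinearMap.rTensor H (Coalgebra.counit : H →ₗ[k] k)) := by
      ext a a' h h'
      simp [circ, imap, smap, tensorTensorTensorComm_tmul, LinearMap.mul'_apply,
        smul_tmul, tmul_smul]
      rw [smul_comm]
    show circ k A H ∘ₗ map LinearMap.id (imap k A H) ∘ₗ
      (map LinearMap.id (smap k A H) ∘ₗ (tensorTensorTensorComm k A A H H).toLinearMap ∘ₗ
        map (Coalgebra.comul : A →ₗ[k] A ⊗[k] A) (Coalgebra.comul : H →ₗ[k] H ⊗[k] H)) = _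
    simp only [← LinearMap.comp_assoc] at key ⊢
    rw [key, ← TensorProduct.map_comp, hu, hv, TensorProduct.map_id]
  · have key : circ k A H ∘ₗ map (imap k A H) LinearMap.id ∘ₗ
        map (tmap k A H d) (LinearMap.id : A ⊗[k] H →ₗ[k] A ⊗[k] H) ∘ₗ
        (tensorTensorTensorComm k A A H H).toLinearMap
      = map ((TensorProduct.lid k A).toLinearMap ∘ₗ
              LinearMap.rTensor A (Coalgebra.counit : A →ₗ[k] k))
            ((TensorProduct.lid k H).toLinearMap ∘ₗ
              LinearMap.rTensor H (Coalgebra.counit : H →ₗ[k] k)) := by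
      ext a a' h h'
      simp [circ, imap, tmap, tensorTensorTensorComm_tmul, LinearMap.mul'_apply,
        smul_tmul, tmul_smul, hd]
      rw [mul_smul, smul_comm]
    show circ k A H ∘ₗ map (imap k A H) LinearMap.id ∘ₗ
      (map (tmap k A H d) LinearMap.id ∘ₗ (tensorTensorTensorComm k A A H H).toLinearMap ∘ₗ
        map (Coalgebra.comul : A →ₗ[k] A ⊗[k] A) (Coalgebra.comul : H →ₗ[k] H ⊗[k] H)) = _
    simp only [← LinearMap.comp_assoc] at key ⊢
    rw [key, ← TensorProduct.map_comp, hu2, hv, TensorProduct.map_id]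


end
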